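/- Let M ≥ 2 be an integer, 1 ≤ l ≤ M-1 and Θ = (θ_1,…,θ_{M-1}) ∈ ℝ^{M-1}. Then lim_{a→∞} [ -a² (d/da) 𝓗_l(a,Θ) ] = -(1 + (-1)^M)π - 2 Σ_{k=0}^{l-1} (-1)^{l+k} (θ_k - θ_l + π) e^{-2i(θ_k - θ_l)} - 2(-1)^M Σ_{k=l}^{M-1} (-1)^{l+k} (θ_k - θ_l - π) e^{-2i(θ_k - θ_l)}, where θ_0 := 0. -/

import Mathlib

/-!
Write `𝓗_l(a, Θ) = h(A(a))`, where `h` is the exponential polynomial in the complex variable `A`.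
By the chain rule `-a² 𝓗_l'(a) = -a² A'(a) h'(A(a)) = -2 (a / (a + i))² h'(A(a))`, and as `a → ∞`
we have `a / (a + i) → 1` and `A(a) → -2i`. Hence the limit is `-2 h'(-2i)`, which is evaluated
using `e^{∓2πi} = 1`.
-/

open Complex Real Finset Filter Topology

noncomputable section

/-- `A(a) = -2ai/(a+i)`. -/
def Afun (a : ℝ) : ℂ := -2 * (a : ℂ) * Complex.I / ((a : ℂ) + Complex.I)

/-- The angles `θ_0 = 0`, `θ_j = Θ_j` for `1 ≤ j ≤ M-1`, read off a vector `Θ ∈ ℝ^{M-1}`. -/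
def thN (M : ℕ) (Θ : Fin (M - 1) → ℝ) (j : ℕ) : ℝ :=
  if h : 1 ≤ j ∧ j ≤ M - 1 then Θ ⟨j - 1, by omega⟩ else 0

/-- `𝓗_l(a,Θ)`, for angles `θ : ℕ → ℝ` (with `θ 0 = 0` understood). -/
def HfunN (M : ℕ) (θ : ℕ → ℝ) (l : ℕ) (a : ℝ) : ℂ :=
  (Complex.exp ((π : ℂ) * Afun a) - (-1 : ℂ) ^ M * Complex.exp (-((π : ℂ) * Afun a))) / 2 +
    (∑ k ∈ Finset.range l,
      (-1 : ℂ) ^ (l + k) * Complex.exp (Afun a * ((θ k - θ l + π : ℝ) : ℂ))) +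
    (-1 : ℂ) ^ M * ∑ k ∈ Finset.Icc l (M - 1),
      (-1 : ℂ) ^ (l + k) * Complex.exp (Afun a * ((θ k - θ l - π : ℝ) : ℂ))

/-- `𝓗_l` as a function of the complex variable `A`, so that `HfunN M θ l = HfunC M θ l ∘ Afun`. -/
def HfunC (M : ℕ) (θ : ℕ → ℝ) (l : ℕ) (z : ℂ) : ℂ :=
  (exp (π * z) - (-1 : ℂ) ^ M * exp (-(π * z))) / 2 +
    (∑ k ∈ range l, (-1 : ℂ) ^ (l + k) * exp (z * ((θ k - θ l + π : ℝ) : ℂ))) +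
    (-1 : ℂ) ^ M * ∑ k ∈ Icc l (M - 1), (-1 : ℂ) ^ (l + k) * exp (z * ((θ k - θ l - π : ℝ) : ℂ))

def derivHfunC (M : ℕ) (θ : ℕ → ℝ) (l : ℕ) (z : ℂ) : ℂ :=
  (π * exp (π * z) + (-1 : ℂ) ^ M * π * exp (-(π * z))) / 2 +
    (∑ k ∈ range l,
      (-1 : ℂ) ^ (l + k) * ((θ k - θ l + π : ℝ) : ℂ) * exp (z * ((θ k - θ l + π : ℝ) : ℂ))) +
    (-1 : ℂ) ^ M * ∑ k ∈ Icc l (M - 1),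
      (-1 : ℂ) ^ (l + k) * ((θ k - θ l - π : ℝ) : ℂ) * exp (z * ((θ k - θ l - π : ℝ) : ℂ))

lemma hasDerivAt_sum_mul_cexp {ι : Type*} (s : Finset ι) (c w : ι → ℂ) (z : ℂ) :
    HasDerivAt (fun z => ∑ k ∈ s, c k * exp (z * w k)) (∑ k ∈ s, c k * w k * exp (z * w k)) z :=
  HasDerivAt.fun_sum fun k _ =>
    ((hasDerivAt_mul_const (w k)).cexp.const_mul (c k)).congr_deriv (by ring)

lemma hasDerivAt_HfunC (M : ℕ) (θ : ℕ → ℝ) (l : ℕ) (z : ℂ) :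
    HasDerivAt (HfunC M θ l) (derivHfunC M θ l z) z := by
  have hπ : HasDerivAt (fun z : ℂ => π * z) (π : ℂ) z := hasDerivAt_const_mul _
  have hcosh := (hπ.cexp.fun_sub (hπ.fun_neg.cexp.const_mul ((-1 : ℂ) ^ M))).div_const 2
  have hsum₁ := hasDerivAt_sum_mul_cexp (range l) (fun k => (-1 : ℂ) ^ (l + k))
    (fun k => ((θ k - θ l + π : ℝ) : ℂ)) z
  have hsum₂ := hasDerivAt_sum_mul_cexp (Icc l (M - 1)) (fun k => (-1 : ℂ) ^ (l + k))
    (fun k => ((θ k - θ l - π : ℝ) : ℂ)) z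
  exact ((hcosh.fun_add hsum₁).fun_add (hsum₂.const_mul ((-1 : ℂ) ^ M))).congr_deriv
    (by unfold derivHfunC; ring)

lemma continuous_derivHfunC (M : ℕ) (θ : ℕ → ℝ) (l : ℕ) : Continuous (derivHfunC M θ l) := by
  unfold derivHfunC
  fun_prop

lemma cexp_neg_two_mul_I_mul_add_pi (x : ℝ) :
    exp (-2 * I * ((x + π : ℝ) : ℂ)) = exp (-2 * I * x) := by
  have h : -2 * I * ((x + π : ℝ) : ℂ) = -2 * I * x - 2 * π * I := by push_cast; ring
  rw [h, exp_periodic.sub_eq]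

lemma cexp_neg_two_mul_I_mul_sub_pi (x : ℝ) :
    exp (-2 * I * ((x - π : ℝ) : ℂ)) = exp (-2 * I * x) := by
  have h : -2 * I * ((x - π : ℝ) : ℂ) = -2 * I * x + 2 * π * I := by push_cast; ring
  rw [h, exp_periodic]

lemma derivHfunC_neg_two_mul_I (M : ℕ) (θ : ℕ → ℝ) (l : ℕ) :
    derivHfunC M θ l (-2 * I) = (1 + (-1 : ℂ) ^ M) * π / 2 +
      (∑ k ∈ range l,
        (-1 : ℂ) ^ (l + k) * ((θ k - θ l + π : ℝ) : ℂ) * exp (-2 * I * ((θ k - θ l : ℝ) : ℂ))) +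
      (-1 : ℂ) ^ M * ∑ k ∈ Icc l (M - 1),
        (-1 : ℂ) ^ (l + k) * ((θ k - θ l - π : ℝ) : ℂ) * exp (-2 * I * ((θ k - θ l : ℝ) : ℂ)) := by
  have h₁ : exp (π * (-2 * I)) = 1 := by
    rw [show π * (-2 * I) = -(2 * π * I) by ring, Complex.exp_neg, exp_two_pi_mul_I, inv_one]
  have h₂ : exp (-(π * (-2 * I))) = 1 := by
    rw [show -(π * (-2 * I)) = 2 * π * I by ring, exp_two_pi_mul_I]
  simp only [derivHfunC, h₁, h₂, cexp_neg_two_mul_I_mul_add_pi, cexp_neg_two_mul_I_mul_sub_pi]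
  ring

lemma ofReal_add_I_ne_zero (a : ℝ) : (a : ℂ) + I ≠ 0 :=
  fun h => by simpa using congrArg im h

lemma hasDerivAt_Afun (a : ℝ) : HasDerivAt Afun (2 / ((a : ℂ) + I) ^ 2) a := by
  have hx : HasDerivAt (fun x : ℝ => (x : ℂ)) 1 a := hasDerivAt_id a |>.ofReal_comp
  refine (((hx.const_mul (-2 : ℂ)).mul_const I).fun_div (hx.add_const I)
    (ofReal_add_I_ne_zero a)).congr_deriv ?_
  congr 1
  linear_combination (-2 : ℂ) * I_sq

lemma tendsto_ofReal_div_ofReal_add_I_atTop :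
    Tendsto (fun a : ℝ => (a : ℂ) / (a + I)) atTop (𝓝 1) := by
  have hinv : Tendsto (fun a : ℝ => (1 + I * ((a⁻¹ : ℝ) : ℂ))⁻¹) atTop (𝓝 (1 + I * 0)⁻¹) :=
    (((continuous_ofReal.tendsto 0).comp tendsto_inv_atTop_zero).const_mul I).const_add 1
      |>.inv₀ (by simp)
  rw [mul_zero, add_zero, inv_one] at hinv
  refine hinv.congr' ?_
  filter_upwards [eventually_ne_atTop 0] with a ha
  have hne := ofReal_add_I_ne_zero a
  have ha' : (a : ℂ) ≠ 0 := ofReal_ne_zero.mpr ha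
  push_cast
  field_simp

lemma tendsto_Afun_atTop : Tendsto Afun atTop (𝓝 (-2 * I)) := by
  have h := tendsto_ofReal_div_ofReal_add_I_atTop.const_mul (-2 * I)
  rw [mul_one] at h
  refine h.congr fun a => ?_
  simp only [Afun]
  ring

lemma tendsto_sq_mul_deriv_Afun_atTop :
    Tendsto (fun a : ℝ => (a : ℂ) ^ 2 * (2 / ((a : ℂ) + I) ^ 2)) atTop (𝓝 2) := by
  have h := (tendsto_ofReal_div_ofReal_add_I_atTop.pow 2).const_mul 2
  rw [one_pow, mul_one] at h
  refine h.congr fun a => ?_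
  rw [div_pow]
  ring

theorem limit_deriv_H_general (M : ℕ) (l : ℕ) (Θ : Fin (M - 1) → ℝ) :
    Tendsto (fun a : ℝ => -(a : ℂ) ^ 2 * deriv (fun x : ℝ => HfunN M (thN M Θ) l x) a)
      atTop
      (𝓝 (-(1 + (-1 : ℂ) ^ M) * (π : ℂ) -
        2 * ∑ k ∈ Finset.range l,
          (-1 : ℂ) ^ (l + k) * ((thN M Θ k - thN M Θ l + π : ℝ) : ℂ) *
            Complex.exp (-2 * Complex.I * ((thN M Θ k - thN M Θ l : ℝ) : ℂ)) -
        2 * (-1 : ℂ) ^ M * ∑ k ∈ Finset.Icc l (M - 1),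
          (-1 : ℂ) ^ (l + k) * ((thN M Θ k - thN M Θ l - π : ℝ) : ℂ) *
            Complex.exp (-2 * Complex.I * ((thN M Θ k - thN M Θ l : ℝ) : ℂ)))) := by
  set θ := thN M Θ
  have hderiv (a : ℝ) : deriv (fun x : ℝ => HfunN M θ l x) a =
      derivHfunC M θ l (Afun a) * (2 / ((a : ℂ) + I) ^ 2) :=
    ((hasDerivAt_HfunC M θ l (Afun a)).comp a (hasDerivAt_Afun a)).deriv
  have hlim := ((((continuous_derivHfunC M θ l).tendsto _).comp tendsto_Afun_atTop).mul
    tendsto_sq_mul_deriv_Afun_atTop).neg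
  convert hlim using 2 with a
  · simp only [hderiv, Function.comp_apply]
    ring
  · rw [derivHfunC_neg_two_mul_I]
    ring

theorem limit_deriv_H (M : ℕ) (hM : 2 ≤ M) (l : ℕ) (hl1 : 1 ≤ l) (hl2 : l ≤ M - 1)
    (Θ : Fin (M - 1) → ℝ) :
    Tendsto (fun a : ℝ => -(a : ℂ) ^ 2 * deriv (fun x : ℝ => HfunN M (thN M Θ) l x) a)
      atTop
      (𝓝 (-(1 + (-1 : ℂ) ^ M) * (π : ℂ) -
        2 * ∑ k ∈ Finset.range l,
          (-1 : ℂ) ^ (l + k) * ((thN M Θ k - thN M Θ l + π : ℝ) : ℂ) *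
            Complex.exp (-2 * Complex.I * ((thN M Θ k - thN M Θ l : ℝ) : ℂ)) -
        2 * (-1 : ℂ) ^ M * ∑ k ∈ Finset.Icc l (M - 1),
          (-1 : ℂ) ^ (l + k) * ((thN M Θ k - thN M Θ l - π : ℝ) : ℂ) *
            Complex.exp (-2 * Complex.I * ((thN M Θ k - thN M Θ l : ℝ) : ℂ)))) :=
  limit_deriv_H_general M l Θ
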